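/- If τ ∈ γ^⊥ ⊂ M_R is γ-generic (i.e., τ(γ') = 0 implies γ' collinear with γ) where γ = \sum_{i∈I} γ_i with γ_i ∈ N, then α := q(τ) = τ∘p ∈ ℳ_R is (I,η)-generic, where p: 𝒩=⊕_{i∈I}Z e_i → N sends e_i ↦ γ_i and η(e_i,e_j) = ⟨γ_i, γ_j⟩. -/

import Mathlib

inductive BTree (ι : Type) where
  | leaf : ι → BTree ι
  | node : BTree ι → BTree ι → BTree ι

namespace BTree

variable {ι : Type}

def leafList : BTree ι → List ι
  | .leaf i => [i]
  | .node l r => leafList l ++ leafList r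

def leafSet [DecidableEq ι] (t : BTree ι) : Finset ι := t.leafList.toFinset

def DecoratedBy [DecidableEq ι] (J : Finset ι) (t : BTree ι) : Prop :=
  t.leafList.Nodup ∧ t.leafSet = J

end BTree

def evalF {ι : Type} (θ : ι → ℝ) (S : Finset ι) : ℝ := ∑ i ∈ S, θ i

def pairS {ι : Type} (ω : ι → ι → ℝ) (S S' : Finset ι) : ℝ := ∑ i ∈ S, ∑ j ∈ S', ω i j

/-- `α` is `(J,η)`-generic: for every `J`-decorated binary rooted tree `T` with
`η(e_{v'}, e_{v''}) ≠ 0` for `v` the child of the root, one has `α(e_{v'}) ≠ 0`. -/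
def JGeneric {ι : Type} [DecidableEq ι] (η : ι → ι → ℝ) (J : Finset ι) (α : ι → ℝ) : Prop :=
  ∀ t l r : BTree ι, t.DecoratedBy J → t = .node l r →
    pairS η l.leafSet r.leafSet ≠ 0 → evalF α l.leafSet ≠ 0

/-! The sum over the left subtree `s = ∑_{i ∈ l} γᵢ` satisfies `τ s = 0`, so genericity makes it
collinear with `γ = ∑ᵢ γᵢ`; an alternating form vanishes on collinear vectors, so
`⟨s, γ - s⟩ = ⟨s, γ⟩ - ⟨s, s⟩ = 0`, which is the pairing `η` of the two subtrees. -/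

open Finset

namespace BTree

variable {ι : Type} [DecidableEq ι]

theorem leafSet_node (l r : BTree ι) : (node l r).leafSet = l.leafSet ∪ r.leafSet :=
  List.toFinset_append

theorem DecoratedBy.disjoint_leafSet_node {J : Finset ι} {l r : BTree ι}
    (h : (node l r).DecoratedBy J) : Disjoint l.leafSet r.leafSet :=
  List.disjoint_toFinset_iff_disjoint.mpr (List.nodup_append'.mp h.1).2.2

theorem DecoratedBy.sum_leafSet_node {M : Type*} [AddCommMonoid M] {J : Finset ι}
    {l r : BTree ι} (h : (node l r).DecoratedBy J) (f : ι → M) :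
    ∑ i ∈ l.leafSet, f i + ∑ i ∈ r.leafSet, f i = ∑ i ∈ J, f i := by
  rw [← sum_union h.disjoint_leafSet_node, ← leafSet_node, h.2]

end BTree

section

variable {ι : Type} {M : Type*} [AddCommMonoid M]

theorem evalF_comp (τ : M →+ ℝ) (γ : ι → M) (S : Finset ι) :
    evalF (fun i => τ (γ i)) S = τ (∑ i ∈ S, γ i) :=
  (map_sum τ γ S).symm

theorem pairS_comp (β : M →+ M →+ ℝ) (γ : ι → M) (S S' : Finset ι) :
    pairS (fun i j => β (γ i) (γ j)) S S' = β (∑ i ∈ S, γ i) (∑ j ∈ S', γ j) := by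
  rw [pairS, map_sum β γ S, AddMonoidHom.finsetSum_apply]
  simp only [map_sum]

end

theorem AddMonoidHom.apply_eq_zero_of_zsmul_eq_zsmul {M R : Type*} [AddCommGroup M]
    [AddCommGroup R] [IsAddTorsionFree R] (β : M →+ M →+ R) (hβ : ∀ x, β x x = 0)
    {x y : M} {a b : ℤ} (hab : ¬(a = 0 ∧ b = 0)) (h : a • x = b • y) : β x y = 0 := by
  have ha : a • β x y = 0 := by
    rw [← AddMonoidHom.zsmul_apply, ← map_zsmul β, h, map_zsmul, AddMonoidHom.zsmul_apply, hβ,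
      smul_zero]
  have hb : b • β x y = 0 := by
    rw [← map_zsmul, ← h, map_zsmul, hβ, smul_zero]
  by_contra hne
  exact hab ⟨by simpa [hne] using ha, by simpa [hne] using hb⟩

theorem gamma_generic_pullback_generic_general {ι : Type} [Fintype ι] [DecidableEq ι]
    {N : Type*} [AddCommGroup N]
    (B : N → N → ℝ) (hBskew : ∀ x y, B y x = - B x y)
    (hBadd₁ : ∀ x y z, B (x + y) z = B x z + B y z)
    (hBadd₂ : ∀ x y z, B x (y + z) = B x y + B x z)
    (γ : ι → N) (τ : N →+ ℝ)
    (hgen : ∀ γ' : N, τ γ' = 0 →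
      ∃ a b : ℤ, ¬(a = 0 ∧ b = 0) ∧ a • γ' = b • (∑ i, γ i)) :
    JGeneric (fun i j => B (γ i) (γ j)) Finset.univ (fun i => τ (γ i)) := by
  let β : N →+ N →+ ℝ :=
    AddMonoidHom.mk' (fun x => AddMonoidHom.mk' (B x) (hBadd₂ x))
      fun x y => AddMonoidHom.ext (hBadd₁ x y)
  have hβ (x : N) : β x x = 0 := self_eq_neg.mp (hBskew x x)
  rintro t l r hdec rfl hpair hτs
  set s := ∑ i ∈ l.leafSet, γ i
  obtain ⟨a, b, hab, hs⟩ := hgen s (by rwa [evalF_comp] at hτs)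
  apply hpair
  calc pairS (fun i j => β (γ i) (γ j)) l.leafSet r.leafSet
      = β s (∑ i ∈ r.leafSet, γ i) := pairS_comp β γ _ _
    _ = β s (∑ i, γ i) := by rw [← hdec.sum_leafSet_node, map_add, hβ, zero_add]
    _ = 0 := β.apply_eq_zero_of_zsmul_eq_zsmul hβ hab hs

/-- If `τ ∈ γ^⊥` is `γ`-generic (`τ(γ') = 0` implies `γ'` collinear with `γ`), where
`γ = ∑_{i∈I} γᵢ`, then `α := q(τ) = τ ∘ p` is `(I,η)`-generic, where `p : ⊕ ℤ e_i → N`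
sends `e_i ↦ γᵢ` (so `α(e_i) = τ(γᵢ)`) and `η(e_i, e_j) = ⟨γᵢ, γⱼ⟩`. -/
theorem gamma_generic_pullback_generic {ι : Type} [Fintype ι] [DecidableEq ι]
    {N : Type*} [AddCommGroup N]
    (B : N → N → ℝ) (hBskew : ∀ x y, B y x = - B x y)
    (hBadd₁ : ∀ x y z, B (x + y) z = B x z + B y z)
    (hBadd₂ : ∀ x y z, B x (y + z) = B x y + B x z)
    (γ : ι → N) (τ : N →+ ℝ)
    (hτγ : τ (∑ i, γ i) = 0)
    (hgen : ∀ γ' : N, τ γ' = 0 →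
      ∃ a b : ℤ, ¬(a = 0 ∧ b = 0) ∧ a • γ' = b • (∑ i, γ i)) :
    JGeneric (fun i j => B (γ i) (γ j)) Finset.univ (fun i => τ (γ i)) :=
  gamma_generic_pullback_generic_general B hBskew hBadd₁ hBadd₂ γ τ hgen
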